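/- For every non-negative integer k, a simple graph G is k-11-representable if and only if every connected component of G is k-11-representable (i.e., if and only if for every vertex v, the induced subgraph of G on the connected component containing v is k-11-representable). -/

import Mathlib

/-- Number of occurrences of the consecutive pattern 11 in a word,
i.e. the number of positions `i` with `u i = u (i+1)`. -/
def pattern11Count {V : Type*} [DecidableEq V] (u : List V) : ℕ :=
  (u.zip u.tail).countP (fun p => decide (p.1 = p.2))

/-- `w` is a `k`-11-representant of the simple graph `G`: every vertex occurs in `w`,
and two distinct vertices are adjacent iff the subword of `w` induced by them contains
at most `k` occurrences of the consecutive pattern 11. -/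
def IsK11Rep {V : Type*} [DecidableEq V] (G : SimpleGraph V) (k : ℕ) (w : List V) : Prop :=
  (∀ v : V, v ∈ w) ∧
  ∀ x y : V, x ≠ y →
    (G.Adj x y ↔ pattern11Count (w.filter (fun a => decide (a = x ∨ a = y))) ≤ k)

/-- A simple graph is `k`-11-representable if it has a `k`-11-representant. -/
def K11Representable {V : Type*} [DecidableEq V] (G : SimpleGraph V) (k : ℕ) : Prop :=
  ∃ w : List V, IsK11Rep G k w

/-- A graph is `t`-uniformly `k`-11-representable if it has a `k`-11-representant in which
every vertex occurs exactly `t` times. -/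
def UniformK11Rep {V : Type*} [DecidableEq V] (G : SimpleGraph V) (t k : ℕ) : Prop :=
  ∃ w : List V, IsK11Rep G k w ∧ ∀ v : V, w.count v = t

/-- The final permutation `σ(w)`: distinct letters of `w` in order of last occurrence. -/
def finalPerm {V : Type*} [DecidableEq V] (w : List V) : List V := w.dedup

/-- The initial permutation `π(w)`: distinct letters of `w` in order of first occurrence. -/
def initPerm {V : Type*} [DecidableEq V] (w : List V) : List V := (w.reverse.dedup).reverse


/-!
Restricting a representant to a vertex set `S` represents the induced subgraph on `S`, since
restriction does not change the subword induced by two vertices of `S`.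

Conversely, let `w_C` represent the component `C` and put `u_C := w_C σ(w_C)^(k+1)`, where
`σ(w)` is the final permutation. For `x ≠ y` in `C`, the word `σ(w_C)` restricted to `{x, y}`
ends with the last letter of `w_C` restricted to `{x, y}` and starts with the other letter, so
appending its copies creates no new factor `11`. Every vertex of `C` occurs at least `k + 2` times
in `u_C`, so in the concatenation of the `u_C` two vertices of different components induce a
subword containing a block of at least `k + 2` equal letters, hence more than `k` factors `11`.
-/

namespace List

variable {α : Type*}

theorem dedup_filter [DecidableEq α] (p : α → Bool) (l : List α) :
    (l.filter p).dedup = l.dedup.filter p := by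
  induction l with
  | nil => rfl
  | cons a l ih =>
    by_cases hp : p a
    · by_cases ha : a ∈ l
      · simp [hp, List.dedup_cons_of_mem ha, List.dedup_cons_of_mem
          (List.mem_filter.mpr ⟨ha, hp⟩), ih]
      · simp [hp, List.dedup_cons_of_notMem ha, List.dedup_cons_of_notMem
          (fun h => ha (List.mem_of_mem_filter h)), ih]
    · rw [List.dedup_cons]
      split_ifs <;> simp [hp, ih]

theorem getLast?_dedup [DecidableEq α] (l : List α) : l.dedup.getLast? = l.getLast? := by
  induction l with
  | nil => rfl
  | cons a l ih =>
    cases l with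
    | nil => rfl
    | cons b t =>
      rw [List.dedup_cons, List.getLast?_cons_cons, ← ih]
      split_ifs
      · rfl
      · obtain ⟨c, r, hcr⟩ := List.exists_cons_of_ne_nil
          (mt (List.dedup_eq_nil (b :: t)).mp (List.cons_ne_nil b t))
        rw [hcr, List.getLast?_cons_cons]

theorem Nodup.head?_ne_getLast? {l : List α} (hl : l.Nodup) {x y : α} (hxy : x ≠ y)
    (hx : x ∈ l) (hy : y ∈ l) : l.head? ≠ l.getLast? := by
  match l, hl, hx, hy with
  | [a], _, hx, hy => simp_all
  | a :: b :: r, hl, _, _ =>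
    rw [List.head?_cons, List.getLast?_cons_cons, ne_eq, eq_comm, List.getLast?_eq_some_iff]
    rintro ⟨s, hs⟩
    exact (List.nodup_cons.mp hl).1 (hs ▸ List.mem_append_right s List.mem_cons_self)

theorem Nodup.flatten_map_eq {ι : Type*} {l : List ι} (hl : l.Nodup) {g : ι → List α}
    {i : ι} (hi : i ∈ l) (hg : ∀ j ∈ l, j ≠ i → g j = []) : (l.map g).flatten = g i := by
  obtain ⟨s, t, rfl⟩ := List.append_of_mem hi
  have hit : i ∉ s ++ t := (List.nodup_cons.mp (List.nodup_middle.mp hl)).1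
  have hvanish : ∀ r, r ⊆ s ++ t → (r.map g).flatten = [] := fun r hr =>
    List.flatten_eq_nil_iff.mpr fun b hb => by
      obtain ⟨j, hj, rfl⟩ := List.mem_map.mp hb
      exact hg j (mem_append.mpr ((mem_append.mp (hr hj)).imp id (mem_cons_of_mem i)))
        (fun h => hit (h ▸ hr hj))
  simp [hvanish s (List.subset_append_left s t), hvanish t (List.subset_append_right s t)]

end List

section Words

variable {V : Type*} [DecidableEq V]

theorem pattern11Count_cons_cons (a b : V) (l : List V) :
    pattern11Count (a :: b :: l) = (if a = b then 1 else 0) + pattern11Count (b :: l) := by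
  by_cases h : a = b <;> simp [pattern11Count, h, Nat.add_comm]

theorem pattern11Count_append_cons (a : List V) (b : V) (t : List V) :
    pattern11Count (a ++ b :: t) =
      pattern11Count a + (if a.getLast? = some b then 1 else 0) + pattern11Count (b :: t) := by
  induction a with
  | nil => simp [pattern11Count]
  | cons c a ih =>
    cases a with
    | nil => rw [List.cons_append, List.nil_append, pattern11Count_cons_cons]; simp [pattern11Count]
    | cons d r =>
      rw [show c :: d :: r ++ b :: t = c :: d :: (r ++ b :: t) from rfl, pattern11Count_cons_cons,
        pattern11Count_cons_cons c d r, ← List.cons_append, ih, List.getLast?_cons_cons]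
      omega

theorem pattern11Count_add_le_append (a b : List V) :
    pattern11Count a + pattern11Count b ≤ pattern11Count (a ++ b) := by
  cases b with
  | nil => simp [pattern11Count]
  | cons b t => rw [pattern11Count_append_cons]; omega

theorem pattern11Count_append_of_getLast?_ne_head? {a b : List V}
    (h : a.getLast? ≠ b.head?) :
    pattern11Count (a ++ b) = pattern11Count a + pattern11Count b := by
  cases b with
  | nil => simp [pattern11Count]
  | cons b t => simp_all [pattern11Count_append_cons]

theorem List.IsInfix.pattern11Count_le {l₁ l₂ : List V} (h : l₁ <:+: l₂) :
    pattern11Count l₁ ≤ pattern11Count l₂ := by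
  obtain ⟨s, t, rfl⟩ := h
  calc pattern11Count l₁ ≤ pattern11Count (s ++ l₁) :=
        le_add_self.trans (pattern11Count_add_le_append s l₁)
    _ ≤ pattern11Count (s ++ l₁ ++ t) :=
        le_self_add.trans (pattern11Count_add_le_append _ t)

theorem pattern11Count_eq_zero_of_nodup {l : List V} (h : l.Nodup) : pattern11Count l = 0 := by
  induction l with
  | nil => rfl
  | cons a l ih =>
    cases l with
    | nil => rfl
    | cons b t =>
      have hab : a ≠ b := fun hab => (List.nodup_cons.mp h).1 (hab ▸ List.mem_cons_self)
      rw [pattern11Count_cons_cons, if_neg hab, ih (List.nodup_cons.mp h).2]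

theorem pattern11Count_replicate (n : ℕ) (a : V) :
    pattern11Count (List.replicate n a) = n - 1 := by
  induction n with
  | zero => rfl
  | succ n ih =>
    cases n with
    | zero => rfl
    | succ n => rw [List.replicate_succ, List.replicate_succ, pattern11Count_cons_cons,
        ← List.replicate_succ, ih]; simp; omega

theorem pattern11Count_map {W : Type*} [DecidableEq W] {f : V → W} (hf : f.Injective)
    (l : List V) : pattern11Count (l.map f) = pattern11Count l := by
  induction l with
  | nil => rfl
  | cons a l ih =>
    cases l with
    | nil => rfl
    | cons b t =>
      rw [List.map_cons, List.map_cons, pattern11Count_cons_cons, ← List.map_cons, ih,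
        pattern11Count_cons_cons]
      simp only [hf.eq_iff]

def padFinalPerm (m : ℕ) (w : List V) : List V :=
  w ++ (List.replicate m (finalPerm w)).flatten

theorem mem_padFinalPerm {m : ℕ} {w : List V} {a : V} : a ∈ padFinalPerm m w ↔ a ∈ w := by
  simp [padFinalPerm, finalPerm]

theorem count_padFinalPerm (m : ℕ) {w : List V} {x : V} (hx : x ∈ w) :
    (padFinalPerm m w).count x = w.count x + m := by
  simp [padFinalPerm, finalPerm, List.count_flatten, List.count_dedup, hx]

theorem filter_padFinalPerm (p : V → Bool) (m : ℕ) (w : List V) :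
    (padFinalPerm m w).filter p = padFinalPerm m (w.filter p) := by
  simp [padFinalPerm, finalPerm, List.filter_flatten, List.dedup_filter]

theorem pattern11Count_append_flatten_replicate {Q : List V} (hQ : Q.Nodup)
    (hQ' : Q.head? ≠ Q.getLast?) (m : ℕ) {t : List V} (ht : t.getLast? = Q.getLast?) :
    pattern11Count (t ++ (List.replicate m Q).flatten) = pattern11Count t := by
  induction m generalizing t with
  | zero => simp
  | succ m ih =>
    have hQt : (t ++ Q).getLast? = Q.getLast? := by
      rw [List.getLast?_append]
      cases h : Q.getLast? <;> simp_all
    rw [List.replicate_succ, List.flatten_cons, ← List.append_assoc, ih hQt,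
      pattern11Count_append_of_getLast?_ne_head? (ht ▸ hQ'.symm),
      pattern11Count_eq_zero_of_nodup hQ, Nat.add_zero]

theorem pattern11Count_padFinalPerm (m : ℕ) {s : List V} {x y : V} (hxy : x ≠ y)
    (hx : x ∈ s) (hy : y ∈ s) : pattern11Count (padFinalPerm m s) = pattern11Count s :=
  pattern11Count_append_flatten_replicate (List.nodup_dedup s)
    ((List.nodup_dedup s).head?_ne_getLast? hxy (List.mem_dedup.mpr hx)
      (List.mem_dedup.mpr hy)) m (List.getLast?_dedup s).symm

section Representants

variable {G : SimpleGraph V} {k : ℕ}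

theorem isK11Rep_induce_iff (S : Set V) (w : List S) :
    IsK11Rep (G.induce S) k w ↔
      (∀ v ∈ S, v ∈ w.map (↑)) ∧
        ∀ x ∈ S, ∀ y ∈ S, x ≠ y →
          (G.Adj x y ↔
            pattern11Count ((w.map (↑)).filter fun a => decide (a = x ∨ a = y)) ≤ k) := by
  have hcount : ∀ x y : S,
      pattern11Count ((w.map (↑)).filter fun a => decide (a = (x : V) ∨ a = y)) =
        pattern11Count (w.filter fun a => decide (a = x ∨ a = y)) := by
    intro x y
    rw [List.filter_map, pattern11Count_map Subtype.val_injective]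
    congr 2
    funext a
    simp [Subtype.ext_iff]
  refine and_congr ⟨fun h v hv => List.mem_map.mpr ⟨⟨v, hv⟩, h _, rfl⟩, fun h v => ?_⟩ ?_
  · obtain ⟨a, ha, hav⟩ := List.mem_map.mp (h v v.2)
    exact Subtype.ext hav ▸ ha
  · simp only [Subtype.forall, ne_eq, Subtype.mk.injEq, ← hcount]
    rfl

theorem K11Representable.induce (S : Set V)
    (h : K11Representable G k) : K11Representable (G.induce S) k := by
  classical
  obtain ⟨w, hw_mem, hw_adj⟩ := h
  obtain ⟨w', hw'⟩ : ∃ w' : List S, w'.map (↑) = w.filter (· ∈ S) := by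
    lift w.filter (· ∈ S) to List S using fun a ha => by simpa using (List.mem_filter.mp ha).2
      with w'
    exact ⟨w', rfl⟩
  refine ⟨w', (isK11Rep_induce_iff S w').mpr ⟨fun v hv => ?_, fun x hx y hy hxy => ?_⟩⟩
  · simp [hw', hw_mem v, hv]
  · rw [hw', List.filter_filter, hw_adj x y hxy]
    congr! 4 with a
    grind

theorem isK11Rep_flatten_padFinalPerm {ι : Type*} [Fintype ι]
    (c : V → ι) (hG : ∀ x y, G.Adj x y → c x = c y) (u : ι → List V)
    (hu_mem : ∀ i a, a ∈ u i ↔ c a = i)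
    (hu_adj : ∀ x y, x ≠ y → c x = c y →
      (G.Adj x y ↔ pattern11Count ((u (c x)).filter fun a => decide (a = x ∨ a = y)) ≤ k)) :
    IsK11Rep G k (Finset.univ.toList.map fun i => padFinalPerm (k + 1) (u i)).flatten := by
  have hmem_univ : ∀ i, i ∈ (Finset.univ : Finset ι).toList := fun i => by simp
  refine ⟨fun v => List.mem_flatten.mpr ⟨_, List.mem_map_of_mem (hmem_univ (c v)),
    mem_padFinalPerm.mpr ((hu_mem _ v).mpr rfl)⟩, fun x y hxy => ?_⟩
  set p : V → Bool := fun a => decide (a = x ∨ a = y)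
  set B : ι → List V := fun i => padFinalPerm (k + 1) ((u i).filter p)
  have hfilter : ((Finset.univ.toList.map fun i => padFinalPerm (k + 1) (u i)).flatten).filter p =
      (Finset.univ.toList.map B).flatten := by
    simp [B, List.filter_flatten, Function.comp_def, filter_padFinalPerm]
  have hx : x ∈ (u (c x)).filter p := List.mem_filter.mpr ⟨(hu_mem _ _).mpr rfl, by simp [p]⟩
  rw [hfilter]
  by_cases hcxy : c x = c y
  · have hvanish : ∀ j, j ≠ c x → B j = [] := by
      intro j hj
      have hnil : (u j).filter p = [] := List.filter_eq_nil_iff.mpr fun a ha hpa => by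
        have hca := (hu_mem j a).mp ha
        simp only [p, decide_eq_true_eq] at hpa
        rcases hpa with rfl | rfl <;> simp_all
      simp [B, hnil, padFinalPerm, finalPerm]
    have hy : y ∈ (u (c x)).filter p :=
      List.mem_filter.mpr ⟨(hu_mem _ _).mpr hcxy.symm, by simp [p]⟩
    rw [(Finset.nodup_toList _).flatten_map_eq (hmem_univ (c x)) (fun j _ => hvanish j),
      pattern11Count_padFinalPerm _ hxy hx hy, hu_adj x y hxy hcxy]
  · refine iff_of_false (fun h => hcxy (hG x y h)) (Nat.not_le.mpr ?_)
    have hBx : ∀ a ∈ B (c x), a = x := by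
      intro a ha
      obtain ⟨hau, hpa⟩ := List.mem_filter.mp (mem_padFinalPerm.mp ha)
      simp only [p, decide_eq_true_eq] at hpa
      rcases hpa with rfl | rfl
      · rfl
      · exact absurd ((hu_mem _ _).mp hau).symm hcxy
    have hlen : k + 2 ≤ (B (c x)).length := by
      have hcount : (B (c x)).count x = _ := count_padFinalPerm (k + 1) hx
      have := List.count_pos_iff.mpr hx
      have := List.count_le_length (a := x) (l := B (c x))
      omega
    calc k < (B (c x)).length - 1 := by omega
      _ = pattern11Count (B (c x)) := by
        conv_rhs => rw [List.eq_replicate_length.mpr hBx]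
        rw [pattern11Count_replicate]
      _ ≤ _ :=
        (List.infix_of_mem_flatten (List.mem_map_of_mem (hmem_univ (c x)))).pattern11Count_le

theorem K11Representable.of_forall_connectedComponent [Fintype V]
    (h : ∀ C : G.ConnectedComponent, K11Representable (G.induce C.supp) k) :
    K11Representable G k := by
  classical
  choose w hw using h
  have hw' := fun C => (isK11Rep_induce_iff C.supp (w C)).mp (hw C)
  refine ⟨_, isK11Rep_flatten_padFinalPerm G.connectedComponentMk
    (fun x y hxy => SimpleGraph.ConnectedComponent.sound hxy.reachable) (fun C => (w C).map (↑))
    (fun C a => ⟨fun ha => ?_, fun ha => (hw' C).1 a ha⟩)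
    (fun x y hxy hcxy => (hw' _).2 x rfl y hcxy.symm hxy)⟩
  obtain ⟨b, -, rfl⟩ := List.mem_map.mp ha
  exact b.2

end Representants

end Words

/-- a graph is `k`-11-representable iff each of its connected components
(the induced subgraph on the component of each vertex) is `k`-11-representable. -/
theorem k11Representable_iff_components {V : Type*} [DecidableEq V] [Fintype V] (k : ℕ)
    (G : SimpleGraph V) :
    K11Representable G k ↔
      ∀ v : V, K11Representable (G.induce (G.connectedComponentMk v).supp) k := by
  refine ⟨fun h v => h.induce _, fun h => .of_forall_connectedComponent fun C => ?_⟩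
  induction C using SimpleGraph.ConnectedComponent.ind with
  | h v => exact h v
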